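/- For nonzero rational numbers a and b, the ℚ-algebras ℚ[X,Y]/(X² + aY², XY) and ℚ[X,Y]/(X² + bY², XY) are isomorphic as ℚ-algebras if and only if there exists a nonzero rational c with a = c²·b (i.e., if and only if a and b represent the same class in ℚ*/(ℚ*)²). -/

import Mathlib

/-!
In `R_b` the maximal ideal `m = (x, y)` has `m² = ℚ y²` and `m³ = 0`, so squaring induces the
binary quadratic form `Q(p x + q y) = q² - b p²` on `m / m²` with values in `m²`. An isomorphism
`R_a ≅ R_b` sends `x, y` to elements `u, v` of `m` whose linear parts form a basis of `m / m²`;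
the relations `uv = 0` and `u² + a v² = 0` say that this basis is `Q`-orthogonal with
`Q(u) = -a Q(v)`, and comparing Gram determinants gives `b · det(u, v)² = a · Q(v)²`.
Conversely, if `a = c² b` then `Y ↦ c⁻¹ Y` induces an isomorphism `R_a ≅ R_b`.
-/

open MvPolynomial

/-- `R a = ℚ[X,Y]/(X² + aY², XY)`. -/
noncomputable abbrev stmt2R (a : ℚ) :=
  MvPolynomial (Fin 2) ℚ ⧸
    Ideal.span ({X 0 ^ 2 + C a * X 1 ^ 2, X 0 * X 1} : Set (MvPolynomial (Fin 2) ℚ))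

/-- `R ⊕ R x ⊕ R y ⊕ R y²` with `x² = -b y²`, `xy = 0`: a copy of `R[X,Y]/(X² + bY², XY)` in
which coordinates can be read off. -/
@[ext]
structure QuadModel (R : Type*) (b : R) where
  const : R
  x : R
  y : R
  socle : R

namespace QuadModel

variable {R : Type*} [CommRing R] {b : R}

instance : Zero (QuadModel R b) := ⟨⟨0, 0, 0, 0⟩⟩
instance : One (QuadModel R b) := ⟨⟨1, 0, 0, 0⟩⟩
instance : Add (QuadModel R b) :=
  ⟨fun z w => ⟨z.const + w.const, z.x + w.x, z.y + w.y, z.socle + w.socle⟩⟩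
instance : Neg (QuadModel R b) := ⟨fun z => ⟨-z.const, -z.x, -z.y, -z.socle⟩⟩
instance : Mul (QuadModel R b) :=
  ⟨fun z w => ⟨z.const * w.const, z.const * w.x + z.x * w.const, z.const * w.y + z.y * w.const,
    z.const * w.socle + z.socle * w.const + z.y * w.y - b * (z.x * w.x)⟩⟩

theorem zero_def : (0 : QuadModel R b) = ⟨0, 0, 0, 0⟩ := rfl
theorem one_def : (1 : QuadModel R b) = ⟨1, 0, 0, 0⟩ := rfl
theorem add_def (z w : QuadModel R b) :
    z + w = ⟨z.const + w.const, z.x + w.x, z.y + w.y, z.socle + w.socle⟩ := rfl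
theorem neg_def (z : QuadModel R b) : -z = ⟨-z.const, -z.x, -z.y, -z.socle⟩ := rfl
theorem mul_def (z w : QuadModel R b) :
    z * w = ⟨z.const * w.const, z.const * w.x + z.x * w.const, z.const * w.y + z.y * w.const,
      z.const * w.socle + z.socle * w.const + z.y * w.y - b * (z.x * w.x)⟩ := rfl

instance : CommRing (QuadModel R b) where
  add_assoc _ _ _ := by simp only [add_def, add_assoc]
  zero_add _ := by simp only [add_def, zero_def, zero_add]
  add_zero _ := by simp only [add_def, zero_def, add_zero]
  add_comm _ _ := by simp only [add_def, add_comm]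
  left_distrib _ _ _ := by simp only [add_def, mul_def]; ext <;> ring
  right_distrib _ _ _ := by simp only [add_def, mul_def]; ext <;> ring
  zero_mul _ := by simp only [zero_def, mul_def]; ext <;> ring
  mul_zero _ := by simp only [zero_def, mul_def]; ext <;> ring
  mul_assoc _ _ _ := by simp only [mul_def]; ext <;> ring
  one_mul _ := by simp only [one_def, mul_def]; ext <;> ring
  mul_one _ := by simp only [one_def, mul_def]; ext <;> ring
  neg_add_cancel _ := by simp only [add_def, neg_def, zero_def, neg_add_cancel]
  mul_comm _ _ := by simp only [mul_def]; ext <;> ring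
  nsmul := nsmulRec
  zsmul := zsmulRec

instance : Algebra R (QuadModel R b) :=
  RingHom.toAlgebra
    { toFun c := ⟨c, 0, 0, 0⟩
      map_one' := rfl
      map_mul' _ _ := by simp only [mul_def]; ext <;> ring
      map_zero' := rfl
      map_add' _ _ := by simp only [add_def, add_zero] }

theorem algebraMap_def (c : R) : algebraMap R (QuadModel R b) c = ⟨c, 0, 0, 0⟩ := rfl

def genX : QuadModel R b := ⟨0, 1, 0, 0⟩
def genY : QuadModel R b := ⟨0, 0, 1, 0⟩

theorem genX_sq_add : (genX : QuadModel R b) ^ 2 + algebraMap R _ b * genY ^ 2 = 0 := by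
  simp only [pow_two, genX, genY, mul_def, add_def, algebraMap_def, zero_def]
  ext <;> ring

theorem genX_mul_genY : (genX : QuadModel R b) * genY = 0 := by
  simp only [genX, genY, mul_def, zero_def]
  ext <;> ring

def constHom : QuadModel R b →ₐ[R] R where
  toFun := const
  map_one' := rfl
  map_mul' _ _ := rfl
  map_zero' := rfl
  map_add' _ _ := rfl
  commutes' _ := rfl

theorem socle_mul_of_const_eq_zero {z w : QuadModel R b} (hz : z.const = 0)
    (hw : w.const = 0) : (z * w).socle = z.y * w.y - b * (z.x * w.x) := by
  simp only [mul_def, hz, hw]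
  ring

def cotangentKer (α β : R) : Subalgebra R (QuadModel R b) where
  carrier := {z | α * z.x + β * z.y = 0}
  mul_mem' {z w} hz hw := by
    simp only [Set.mem_ofPred_eq, mul_def] at *
    linear_combination z.const * hw + w.const * hz
  add_mem' {z w} hz hw := by
    simp only [Set.mem_ofPred_eq, add_def] at *
    linear_combination hz + hw
  algebraMap_mem' c := by simp [algebraMap_def]

theorem mem_cotangentKer {α β : R} {z : QuadModel R b} :
    z ∈ cotangentKer α β ↔ α * z.x + β * z.y = 0 := Iff.rfl

end QuadModel

/-- `(p, q)` and `(s, t)` are orthogonal for `Q(p, q) = q² - b p²` with `Q(p, q) = -a Q(s, t)`;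
the Gram determinant identity reads `b (pt - qs)² = a Q(s, t)²`. -/
theorem exists_eq_sq_mul_of_orthogonal {K : Type*} [Field K] {a b p q s t : K} (hb : b ≠ 0)
    (horth : q * t - b * (p * s) = 0) (hsq : q ^ 2 - b * p ^ 2 + a * (t ^ 2 - b * s ^ 2) = 0)
    (hdet : p * t - q * s ≠ 0) : ∃ c, c ≠ 0 ∧ a = c ^ 2 * b := by
  set k := t ^ 2 - b * s ^ 2
  have hgram : b * (p * t - q * s) ^ 2 = a * k ^ 2 := by
    linear_combination (-k) * hsq + (q * t - b * (p * s)) * horth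
  have hk : k ≠ 0 := fun hk => mul_ne_zero hb (pow_ne_zero 2 hdet) (by rw [hgram, hk]; ring)
  refine ⟨(p * t - q * s) / k, div_ne_zero hdet hk, ?_⟩
  field_simp
  linear_combination -hgram

namespace stmt2R

variable (a : ℚ)

noncomputable def genX : stmt2R a := Ideal.Quotient.mkₐ ℚ _ (X 0)
noncomputable def genY : stmt2R a := Ideal.Quotient.mkₐ ℚ _ (X 1)

theorem genX_sq_add : genX a ^ 2 + algebraMap ℚ (stmt2R a) a * genY a ^ 2 = 0 := by
  rw [genX, genY, ← map_pow, ← map_pow, ← (Ideal.Quotient.mkₐ ℚ _).commutes, ← map_mul,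
    ← map_add, Ideal.Quotient.mkₐ_eq_mk, Ideal.Quotient.eq_zero_iff_mem]
  exact Ideal.subset_span (by simp [MvPolynomial.algebraMap_eq])

theorem genX_mul_genY : genX a * genY a = 0 := by
  rw [genX, genY, ← map_mul, Ideal.Quotient.mkₐ_eq_mk, Ideal.Quotient.eq_zero_iff_mem]
  exact Ideal.subset_span (by simp)

variable {a} {A : Type*} [CommRing A] [Algebra ℚ A]

noncomputable def lift (x y : A) (hsq : x ^ 2 + algebraMap ℚ A a * y ^ 2 = 0) (hxy : x * y = 0) :
    stmt2R a →ₐ[ℚ] A :=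
  Ideal.Quotient.liftₐ _ (aeval ![x, y]) fun _ hp => RingHom.mem_ker.mp <|
    Ideal.span_le.mpr (by rintro _ (rfl | rfl) <;> simp [hsq, hxy]) hp

section lift

variable (x y : A) (hsq : x ^ 2 + algebraMap ℚ A a * y ^ 2 = 0) (hxy : x * y = 0)

@[simp] theorem lift_genX : lift x y hsq hxy (genX a) = x := by
  rw [genX, ← AlgHom.comp_apply, lift, Ideal.Quotient.liftₐ_comp]
  simp

@[simp] theorem lift_genY : lift x y hsq hxy (genY a) = y := by
  rw [genY, ← AlgHom.comp_apply, lift, Ideal.Quotient.liftₐ_comp]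
  simp

end lift

theorem algHom_ext {f g : stmt2R a →ₐ[ℚ] A} (hx : f (genX a) = g (genX a))
    (hy : f (genY a) = g (genY a)) : f = g := by
  refine Ideal.Quotient.algHom_ext _ (MvPolynomial.algHom_ext fun i => ?_)
  fin_cases i
  exacts [hx, hy]

theorem range_le_of_gen_mem (f : stmt2R a →ₐ[ℚ] A) {S : Subalgebra ℚ A} (hx : f (genX a) ∈ S)
    (hy : f (genY a) ∈ S) : f.range ≤ S := by
  have hf : f.comp (Ideal.Quotient.mkₐ ℚ _) = aeval ![f (genX a), f (genY a)] :=
    MvPolynomial.algHom_ext fun i => by fin_cases i <;> simp [genX, genY]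
  have hle : (aeval ![f (genX a), f (genY a)]).range ≤ S := by
    rw [aeval_range]
    exact Algebra.adjoin_le (by simp [Set.insert_subset_iff, hx, hy])
  rintro _ ⟨r, rfl⟩
  obtain ⟨p, rfl⟩ := Ideal.Quotient.mkₐ_surjective ℚ _ r
  exact hle ⟨p, (DFunLike.congr_fun hf p).symm⟩

theorem map_gen_eq_zero_of_isDomain (ha : a ≠ 0) {K : Type*} [CommRing K] [IsDomain K]
    [Algebra ℚ K] (χ : stmt2R a →ₐ[ℚ] K) : χ (genX a) = 0 ∧ χ (genY a) = 0 := by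
  have hsq := congrArg χ (genX_sq_add a)
  have hxy := congrArg χ (genX_mul_genY a)
  simp only [map_add, map_mul, map_pow, AlgHom.commutes, map_zero] at hsq hxy
  have ha' : algebraMap ℚ K a ≠ 0 := by simpa using ha
  rcases mul_eq_zero.mp hxy with hx | hy <;> simp_all

noncomputable def scaleY {b : ℚ} (d : ℚ) (h : a * d ^ 2 = b) : stmt2R a →ₐ[ℚ] stmt2R b :=
  lift (genX b) (algebraMap ℚ _ d * genY b)
    (by
      have hd : algebraMap ℚ (stmt2R b) a * algebraMap ℚ _ d ^ 2 = algebraMap ℚ _ b := by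
        rw [← map_pow, ← map_mul, h]
      linear_combination genX_sq_add b + genY b ^ 2 * hd)
    (by linear_combination algebraMap ℚ (stmt2R b) d * genX_mul_genY b)

section scaleY

variable {b : ℚ} (d : ℚ) (h : a * d ^ 2 = b)

@[simp] theorem scaleY_genX : scaleY d h (genX a) = genX b := lift_genX ..

@[simp] theorem scaleY_genY : scaleY d h (genY a) = d • genY b :=
  (lift_genY ..).trans (Algebra.smul_def _ _).symm

end scaleY

theorem nonempty_algEquiv_of_eq_sq_mul {b c : ℚ} (hc : c ≠ 0) (h : a = c ^ 2 * b) :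
    Nonempty (stmt2R a ≃ₐ[ℚ] stmt2R b) :=
  ⟨AlgEquiv.ofAlgHom (scaleY c⁻¹ (by rw [h]; field_simp)) (scaleY c (by rw [h]; ring))
    (algHom_ext (by simp) (by simp [smul_smul, hc]))
    (algHom_ext (by simp) (by simp [smul_smul, hc]))⟩

noncomputable def toQuadModel (b : ℚ) : stmt2R b →ₐ[ℚ] QuadModel ℚ b :=
  lift QuadModel.genX QuadModel.genY QuadModel.genX_sq_add QuadModel.genX_mul_genY

/-- If the linear parts of `φ x` and `φ y` were dependent, a functional killing both would cut out
a proper subalgebra containing the range of `φ`. -/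
theorem det_ne_zero_of_mem_range {b : ℚ} (φ : stmt2R a →ₐ[ℚ] QuadModel ℚ b)
    (hX : QuadModel.genX ∈ φ.range) (hY : QuadModel.genY ∈ φ.range) :
    (φ (genX a)).x * (φ (genY a)).y - (φ (genX a)).y * (φ (genY a)).x ≠ 0 := by
  set u := φ (genX a)
  set v := φ (genY a)
  intro hdet
  obtain ⟨w, hw, hker⟩ := Matrix.exists_mulVec_eq_zero_iff.mpr
    (show (!![u.x, u.y; v.x, v.y]).det = 0 by rw [Matrix.det_fin_two_of]; exact hdet)
  have hle : φ.range ≤ QuadModel.cotangentKer (w 0) (w 1) := by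
    have hu : u.x * w 0 + u.y * w 1 = 0 := by
      simpa [Matrix.vecHead, Matrix.vecTail] using congrFun hker 0
    have hv : v.x * w 0 + v.y * w 1 = 0 := by
      simpa [Matrix.vecHead, Matrix.vecTail] using congrFun hker 1
    refine range_le_of_gen_mem φ ?_ ?_ <;> rw [QuadModel.mem_cotangentKer]
    · linear_combination hu
    · linear_combination hv
  have h0 : w 0 = 0 := by
    simpa [QuadModel.genX] using QuadModel.mem_cotangentKer.mp (hle hX)
  have h1 : w 1 = 0 := by
    simpa [QuadModel.genY] using QuadModel.mem_cotangentKer.mp (hle hY)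
  exact hw (by ext i; fin_cases i <;> assumption)

theorem exists_eq_sq_mul_of_algEquiv {b : ℚ} (ha : a ≠ 0) (hb : b ≠ 0)
    (e : stmt2R a ≃ₐ[ℚ] stmt2R b) : ∃ c, c ≠ 0 ∧ a = c ^ 2 * b := by
  set φ := (toQuadModel b).comp (e : stmt2R a →ₐ[ℚ] stmt2R b)
  obtain ⟨hu, hv⟩ : (φ (genX a)).const = 0 ∧ (φ (genY a)).const = 0 :=
    map_gen_eq_zero_of_isDomain ha (QuadModel.constHom.comp φ)
  have horth := congrArg QuadModel.socle (show φ (genX a) * φ (genY a) = 0 by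
    rw [← map_mul, genX_mul_genY, map_zero])
  have hsq := congrArg QuadModel.socle
    (show φ (genX a) ^ 2 + algebraMap ℚ _ a * φ (genY a) ^ 2 = 0 by
      rw [← map_pow, ← map_pow, ← φ.commutes, ← map_mul, ← map_add, genX_sq_add, map_zero])
  rw [QuadModel.socle_mul_of_const_eq_zero hu hv, QuadModel.zero_def] at horth
  simp only [pow_two, QuadModel.add_def, QuadModel.algebraMap_def, QuadModel.mul_def,
    QuadModel.zero_def, hu, hv] at hsq
  refine exists_eq_sq_mul_of_orthogonal hb horth (by linear_combination hsq) ?_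
  exact det_ne_zero_of_mem_range φ ⟨e.symm (genX b), by simp [φ, toQuadModel]⟩
    ⟨e.symm (genY b), by simp [φ, toQuadModel]⟩

end stmt2R

/-- For nonzero rationals `a`, `b`, the `ℚ`-algebras `ℚ[X,Y]/(X² + aY², XY)` and
`ℚ[X,Y]/(X² + bY², XY)` are isomorphic iff `a = c² b` for some nonzero rational `c`. -/
theorem stmt_2 (a b : ℚ) (ha : a ≠ 0) (hb : b ≠ 0) :
    Nonempty (stmt2R a ≃ₐ[ℚ] stmt2R b) ↔ ∃ c : ℚ, c ≠ 0 ∧ a = c ^ 2 * b :=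
  ⟨fun ⟨e⟩ => stmt2R.exists_eq_sq_mul_of_algEquiv ha hb e,
    fun ⟨_, hc, h⟩ => stmt2R.nonempty_algEquiv_of_eq_sq_mul hc h⟩
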